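/- Let f : [t₀,∞) × ℝ → ℝ (t₀ ≥ 1) be continuous with continuous partial derivative ∂f/∂t, and assume v·[3f(t,v) + t·(∂f/∂t)(t,v)] ≤ 0 for all t ≥ t₀ and all v ≠ 0. Let (u,v) be a solution of the system u′ = −t f(t,v), v′ = u/t² on an interval [t₀,T) and define V(t) = u(t)²/2 + t³·∫_{0}^{v(t)} f(t,s) ds. Then V′(t) = t²·∫_{0}^{v(t)} [3f(t,s) + t(∂f/∂t)(t,s)] ds ≤ 0, so V is nonincreasing on [t₀,T). -/

import Mathlib

/-!
Along a solution, `V′ = u u′ + 3t² ∫₀^v f + t³ (f(t,v) v′ + ∫₀^v ∂ₜf)`, and the terms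
`u·(−t f(t,v))` and `t³ f(t,v)·u/t²` cancel, leaving `t² ∫₀^v (3f + t ∂ₜf)`. This is `≤ 0`
because the integrand has the sign opposite to `s`, and the mean value theorem turns `V′ ≤ 0`
into monotonicity. The derivative of `t ↦ ∫₀^{v(t)} f(t,s) ds` comes from the continuity of both
partial derivatives of `(t, y) ↦ ∫₀^y f(t,s) ds`.
-/

open Filter Set

/-- With `c = g' a`, this turns a one-sided derivative of `g` on `Ici a` into a two-sided one
that is still continuous in `τ`. -/
def extendByTangent (a : ℝ) (g : ℝ → ℝ) (c : ℝ) (τ : ℝ) : ℝ :=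
  g (max τ a) + (min τ a - a) * c

theorem extendByTangent_of_le {a τ : ℝ} (g : ℝ → ℝ) (c : ℝ) (h : a ≤ τ) :
    extendByTangent a g c τ = g τ := by
  simp [extendByTangent, h]

theorem extendByTangent_of_ge {a τ : ℝ} (g : ℝ → ℝ) (c : ℝ) (h : τ ≤ a) :
    extendByTangent a g c τ = g a + (τ - a) * c := by
  simp [extendByTangent, h]

theorem hasDerivAt_extendByTangent {a : ℝ} {g g' : ℝ → ℝ}
    (hg : ∀ τ ∈ Ici a, HasDerivWithinAt g (g' τ) (Ici a) τ) (τ : ℝ) :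
    HasDerivAt (extendByTangent a g (g' a)) (g' (max τ a)) τ := by
  have right : HasDerivWithinAt (extendByTangent a g (g' a)) (g' (max τ a)) (Ici a) τ := by
    rcases le_or_gt a τ with h | h
    · rw [max_eq_left h]
      exact (hg τ h).congr (fun x hx => extendByTangent_of_le g _ hx) (extendByTangent_of_le g _ h)
    · exact HasFDerivWithinAt.of_notMem_closure (by simpa using h)
  have left : HasDerivWithinAt (extendByTangent a g (g' a)) (g' (max τ a)) (Iic a) τ := by
    rcases le_or_gt τ a with h | h
    · rw [max_eq_right h]
      have tangent : HasDerivAt (fun x => g a + (x - a) * g' a) (g' a) τ := by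
        simpa using (((hasDerivAt_id τ).sub_const a).mul_const (g' a)).const_add (g a)
      exact tangent.hasDerivWithinAt.congr (fun x hx => extendByTangent_of_ge g _ hx)
        (extendByTangent_of_ge g _ h)
    · exact HasFDerivWithinAt.of_notMem_closure (by simpa using h)
  simpa [Iic_union_Ici] using left.union right

theorem ContinuousOn.continuous_comp_max_fst {g : ℝ → ℝ → ℝ} {a : ℝ}
    (hg : ContinuousOn (fun p : ℝ × ℝ => g p.1 p.2) (Ici a ×ˢ univ)) :
    Continuous fun p : ℝ × ℝ => g (max p.1 a) p.2 :=
  hg.comp_continuous ((continuous_fst.max continuous_const).prodMk continuous_snd)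
    fun p => ⟨mem_Ici.2 (le_max_right p.1 a), trivial⟩

theorem ContinuousOn.continuous_extendByTangent {g g' : ℝ → ℝ → ℝ} {a : ℝ}
    (hg : ContinuousOn (fun p : ℝ × ℝ => g p.1 p.2) (Ici a ×ˢ univ))
    (hg' : ContinuousOn (fun p : ℝ × ℝ => g' p.1 p.2) (Ici a ×ˢ univ)) :
    Continuous fun p : ℝ × ℝ => extendByTangent a (g · p.2) (g' a p.2) p.1 := by
  have hg'_a : Continuous (g' a) :=
    hg'.comp_continuous (continuous_const.prodMk continuous_id) fun _ => ⟨self_mem_Ici, trivial⟩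
  exact hg.continuous_comp_max_fst.add
    (((continuous_fst.min continuous_const).sub continuous_const).mul (hg'_a.comp continuous_snd))

theorem intervalIntegral_nonpos_of_mul_nonpos {g : ℝ → ℝ} (hg : ∀ w, w ≠ 0 → w * g w ≤ 0)
    (y : ℝ) : ∫ s in (0 : ℝ)..y, g s ≤ 0 := by
  rcases le_total 0 y with hy | hy
  · rw [intervalIntegral.integral_of_le hy]
    refine MeasureTheory.setIntegral_nonpos measurableSet_Ioc fun w hw => ?_
    exact nonpos_of_mul_nonpos_right (hg w hw.1.ne') hw.1
  · rw [intervalIntegral.integral_of_ge hy, neg_nonpos,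
      MeasureTheory.setIntegral_congr_set MeasureTheory.Ioo_ae_eq_Ioc.symm]
    refine MeasureTheory.setIntegral_nonneg measurableSet_Ioo fun w hw => ?_
    exact nonneg_of_mul_nonpos_right (hg w hw.2.ne) hw.2

section LeibnizRule

variable {F Ft : ℝ → ℝ → ℝ}

theorem hasDerivAt_intervalIntegral_of_hasDerivAt_param
    (hF : Continuous ↿F) (hFt : Continuous ↿Ft) (hderiv : ∀ τ s, HasDerivAt (F · s) (Ft τ s) τ)
    (a b τ₀ : ℝ) :
    HasDerivAt (fun τ => ∫ s in a..b, F τ s) (∫ s in a..b, Ft τ₀ s) τ₀ := by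
  obtain ⟨M, hM⟩ := ((isCompact_closedBall τ₀ 1).prod isCompact_uIcc).exists_bound_of_continuousOn
    hFt.continuousOn
  refine (intervalIntegral.hasDerivAt_integral_of_dominated_loc_of_deriv_le (bound := fun _ => M)
    (Metric.ball_mem_nhds τ₀ one_pos)
    (Eventually.of_forall fun τ => (hF.uncurry_left τ).aestronglyMeasurable)
    ((hF.uncurry_left τ₀).intervalIntegrable a b)
    (hFt.uncurry_left τ₀).aestronglyMeasurable ?_ intervalIntegrable_const
    (Eventually.of_forall fun s _ τ _ => hderiv τ s)).2
  exact Eventually.of_forall fun s hs τ hτ =>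
    hM (τ, s) ⟨Metric.ball_subset_closedBall hτ, uIoc_subset_uIcc hs⟩

theorem hasDerivAt_intervalIntegral_param_comp
    (hF : Continuous ↿F) (hFt : Continuous ↿Ft) (hderiv : ∀ τ s, HasDerivAt (F · s) (Ft τ s) τ)
    (a : ℝ) {v : ℝ → ℝ} {v' t : ℝ} (hv : HasDerivAt v v' t) :
    HasDerivAt (fun τ => ∫ s in a..v τ, F τ s) ((∫ s in a..v t, Ft t s) + F t (v t) * v') t := by
  have hτ (p : ℝ × ℝ) : HasDerivAt (fun τ => ∫ s in a..p.2, F τ s) (∫ s in a..p.2, Ft p.1 s) p.1 :=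
    hasDerivAt_intervalIntegral_of_hasDerivAt_param hF hFt hderiv a p.2 p.1
  have hy (p : ℝ × ℝ) : HasDerivAt (fun y => ∫ s in a..y, F p.1 s) (F p.1 p.2) p.2 :=
    ((hF.uncurry_left p.1).integral_hasStrictDerivAt a p.2).hasDerivAt
  have hτ_cont : Continuous fun p : ℝ × ℝ => ∫ s in a..p.2, Ft p.1 s :=
    intervalIntegral.continuous_parametric_primitive_of_continuous hFt
  have hstrict :=
    hasStrictFDerivAt_uncurry_coprod (𝕜 := ℝ) (u := (t, v t)) (f := fun τ y => ∫ s in a..y, F τ s)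
      (f₁ := fun τ y => ContinuousLinearMap.toSpanSingleton ℝ (∫ s in a..y, Ft τ s))
      (f₂ := fun τ y => ContinuousLinearMap.toSpanSingleton ℝ (F τ y))
      (.of_forall fun p => (hτ p).hasFDerivAt) (.of_forall fun p => (hy p).hasFDerivAt)
      ((ContinuousLinearMap.toSpanSingletonLIE ℝ ℝ).continuous.comp hτ_cont).continuousAt
      ((ContinuousLinearMap.toSpanSingletonLIE ℝ ℝ).continuous.comp hF).continuousAt
  refine (hstrict.hasFDerivAt.comp_hasDerivAt t ((hasDerivAt_id t).prodMk hv)).congr_deriv ?_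
  simp [Function.HasUncurry.uncurry, mul_comm]

theorem hasDerivAt_lyapunov
    (hF : Continuous ↿F) (hFt : Continuous ↿Ft) (hderiv : ∀ τ s, HasDerivAt (F · s) (Ft τ s) τ)
    {u v : ℝ → ℝ} {t : ℝ} (ht : t ≠ 0)
    (hu : HasDerivAt u (-(t * F t (v t))) t) (hv : HasDerivAt v (u t / t ^ 2) t) :
    HasDerivAt (fun τ => u τ ^ 2 / 2 + τ ^ 3 * ∫ s in (0 : ℝ)..v τ, F τ s)
      (t ^ 2 * ∫ s in (0 : ℝ)..v t, 3 * F t s + t * Ft t s) t := by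
  have hI := hasDerivAt_intervalIntegral_param_comp hF hFt hderiv 0 hv
  refine (((hu.pow 2).div_const 2).add ((hasDerivAt_pow 3 t).mul hI)).congr_deriv ?_
  rw [intervalIntegral.integral_add (((hF.uncurry_left t).const_mul 3).intervalIntegrable _ _)
      (((hFt.uncurry_left t).const_mul t).intervalIntegrable _ _),
    intervalIntegral.integral_const_mul, intervalIntegral.integral_const_mul]
  field_simp
  ring

end LeibnizRule

theorem lyapunov_nonincreasing_second_general
    (t₀ : ℝ) (ht₀ : 1 ≤ t₀) (f ft : ℝ → ℝ → ℝ)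
    (hf_cont : ContinuousOn (fun p : ℝ × ℝ => f p.1 p.2) (Set.Ici t₀ ×ˢ Set.univ))
    (hft : ∀ w : ℝ, ∀ t ∈ Set.Ici t₀,
      HasDerivWithinAt (fun s => f s w) (ft t w) (Set.Ici t₀) t)
    (hft_cont : ContinuousOn (fun p : ℝ × ℝ => ft p.1 p.2) (Set.Ici t₀ ×ˢ Set.univ))
    (hsign : ∀ t ∈ Set.Ici t₀, ∀ w : ℝ, w ≠ 0 → w * (3 * f t w + t * ft t w) ≤ 0)
    (Tinf : EReal)
    (u v : ℝ → ℝ)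
    (hu : ∀ t : ℝ, t₀ ≤ t → (t : EReal) < Tinf → HasDerivAt u (-(t * f t (v t))) t)
    (hv : ∀ t : ℝ, t₀ ≤ t → (t : EReal) < Tinf → HasDerivAt v (u t / t ^ 2) t) :
    (∀ t : ℝ, t₀ ≤ t → (t : EReal) < Tinf →
      HasDerivWithinAt (fun τ => u τ ^ 2 / 2 + τ ^ 3 * ∫ s in (0 : ℝ)..(v τ), f τ s)
        (t ^ 2 * ∫ s in (0 : ℝ)..(v t), 3 * f t s + t * ft t s)
        {r : ℝ | t₀ ≤ r ∧ (r : EReal) < Tinf} t ∧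
      t ^ 2 * (∫ s in (0 : ℝ)..(v t), 3 * f t s + t * ft t s) ≤ 0) ∧
    AntitoneOn (fun τ => u τ ^ 2 / 2 + τ ^ 3 * ∫ s in (0 : ℝ)..(v τ), f τ s)
      {r : ℝ | t₀ ≤ r ∧ (r : EReal) < Tinf} := by
  set S := {r : ℝ | t₀ ≤ r ∧ (r : EReal) < Tinf}
  set F : ℝ → ℝ → ℝ := fun τ s => extendByTangent t₀ (f · s) (ft t₀ s) τ
  have hF_eq (τ : ℝ) (hτ : t₀ ≤ τ) : F τ = f τ := funext fun s => extendByTangent_of_le _ _ hτ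
  have hF : Continuous ↿F := hf_cont.continuous_extendByTangent hft_cont
  have hFt : Continuous fun p : ℝ × ℝ => ft (max p.1 t₀) p.2 := hft_cont.continuous_comp_max_fst
  have hV (t : ℝ) (ht : t ∈ S) : HasDerivWithinAt
      (fun τ => u τ ^ 2 / 2 + τ ^ 3 * ∫ s in (0 : ℝ)..(v τ), f τ s)
      (t ^ 2 * ∫ s in (0 : ℝ)..(v t), 3 * f t s + t * ft t s) S t := by
    have ht_ne : t ≠ 0 := (zero_lt_one.trans_le (ht₀.trans ht.1)).ne'
    have hV := hasDerivAt_lyapunov hF hFt (fun τ s => hasDerivAt_extendByTangent (hft s) τ) ht_ne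
      (by rw [hF_eq t ht.1]; exact hu t ht.1 ht.2) (hv t ht.1 ht.2)
    rw [hF_eq t ht.1, max_eq_left ht.1] at hV
    exact hV.hasDerivWithinAt.congr (fun τ hτ => by rw [hF_eq τ hτ.1]) (by rw [hF_eq t ht.1])
  have hV_nonpos (t : ℝ) (ht : t₀ ≤ t) :
      t ^ 2 * (∫ s in (0 : ℝ)..(v t), 3 * f t s + t * ft t s) ≤ 0 :=
    mul_nonpos_of_nonneg_of_nonpos (sq_nonneg t)
      (intervalIntegral_nonpos_of_mul_nonpos (hsign t ht) _)
  have hS : Convex ℝ S :=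
    OrdConnected.convex ⟨fun x hx y hy z hz =>
      ⟨hx.1.trans hz.1, (EReal.coe_le_coe_iff.2 hz.2).trans_lt hy.2⟩⟩
  refine ⟨fun t ht hT => ⟨hV t ⟨ht, hT⟩, hV_nonpos t ht⟩, ?_⟩
  exact antitoneOn_of_hasDerivWithinAt_nonpos hS (fun t ht => (hV t ht).continuousWithinAt)
    (fun t ht => (hV t (interior_subset ht)).mono interior_subset)
    (fun t ht => hV_nonpos t (interior_subset ht).1)

/-- The Lyapunov function `V(t) = u(t)²/2 + t³·∫_0^{v(t)} f(t,s) ds` along a solution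
`(u, v)` of the system `u′ = −t f(t,v)`, `v′ = u/t²` satisfies
`V′(t) = t²·∫_0^{v(t)} [3f(t,s) + t ∂f/∂t(t,s)] ds ≤ 0` when
`v·[3f(t,v) + t·∂f/∂t(t,v)] ≤ 0` for `v ≠ 0`; hence `V` is nonincreasing on `[t₀, T)`. -/
theorem lyapunov_nonincreasing_second
    (t₀ : ℝ) (ht₀ : 1 ≤ t₀) (f ft : ℝ → ℝ → ℝ)
    (hf_cont : ContinuousOn (fun p : ℝ × ℝ => f p.1 p.2) (Set.Ici t₀ ×ˢ Set.univ))
    (hft : ∀ w : ℝ, ∀ t ∈ Set.Ici t₀,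
      HasDerivWithinAt (fun s => f s w) (ft t w) (Set.Ici t₀) t)
    (hft_cont : ContinuousOn (fun p : ℝ × ℝ => ft p.1 p.2) (Set.Ici t₀ ×ˢ Set.univ))
    (hsign : ∀ t ∈ Set.Ici t₀, ∀ w : ℝ, w ≠ 0 → w * (3 * f t w + t * ft t w) ≤ 0)
    (Tinf : EReal) (hT : (t₀ : EReal) < Tinf)
    (u v : ℝ → ℝ)
    (hu : ∀ t : ℝ, t₀ ≤ t → (t : EReal) < Tinf → HasDerivAt u (-(t * f t (v t))) t)
    (hv : ∀ t : ℝ, t₀ ≤ t → (t : EReal) < Tinf → HasDerivAt v (u t / t ^ 2) t) :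
    (∀ t : ℝ, t₀ ≤ t → (t : EReal) < Tinf →
      HasDerivWithinAt (fun τ => u τ ^ 2 / 2 + τ ^ 3 * ∫ s in (0 : ℝ)..(v τ), f τ s)
        (t ^ 2 * ∫ s in (0 : ℝ)..(v t), 3 * f t s + t * ft t s)
        {r : ℝ | t₀ ≤ r ∧ (r : EReal) < Tinf} t ∧
      t ^ 2 * (∫ s in (0 : ℝ)..(v t), 3 * f t s + t * ft t s) ≤ 0) ∧
    AntitoneOn (fun τ => u τ ^ 2 / 2 + τ ^ 3 * ∫ s in (0 : ℝ)..(v τ), f τ s)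
      {r : ℝ | t₀ ≤ r ∧ (r : EReal) < Tinf} :=
  lyapunov_nonincreasing_second_general t₀ ht₀ f ft hf_cont hft hft_cont hsign Tinf u v hu hv
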